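/- For m ≥ 4, define Θ_m = ∑_{i=4}^{m} (t_{i-4} − k_{i-3} + 1). Then 2·Θ_m = t_{m-2} − t_{m-3} + 2t_{m-4} + m − 6. -/

import Mathlib

/-- Tribonacci numbers, index-shifted so that `trib n` represents t_{n-2}:
`trib 0 = t₋₂ = 0`, `trib 1 = t₋₁ = 1`, `trib 2 = t₀ = 1`, and
`trib (n+3) = trib (n+2) + trib (n+1) + trib n`. -/
def trib : ℕ → ℕ
  | 0 => 0
  | 1 => 1
  | 2 => 1
  | n + 3 => trib (n + 2) + trib (n + 1) + trib n

/-- Kernel numbers: k₀ = 0, k₁ = k₂ = 1, k_m = k_{m-1} + k_{m-2} + k_{m-3} - 1 for m ≥ 3. -/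
def ker : ℕ → ℕ
  | 0 => 0
  | 1 => 1
  | 2 => 1
  | n + 3 => ker (n + 2) + ker (n + 1) + ker n - 1

/-! The kernel numbers are affine in the Tribonacci numbers, `2 k_m = t_{m-2} - t_{m-4} + 1`,
since the right-hand side satisfies the same inhomogeneous recurrence and initial values.
Hence `2 (t_{m-4} - k_{m-3} + 1) = 2 t_{m-4} - t_{m-5} + t_{m-7} + 1`, and adding this to the
claimed value of `2 Θ_{m-1}` gives the claimed value of `2 Θ_m` by the Tribonacci recurrence. -/

theorem cast_trib_add_three {R : Type*} [AddMonoidWithOne R] (n : ℕ) :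
    (trib (n + 3) : R) = trib (n + 2) + trib (n + 1) + trib n := by
  simp only [trib, Nat.cast_add]

theorem one_le_ker : ∀ n, 1 ≤ ker (n + 1)
  | 0 | 1 => le_rfl
  | n + 2 => by
    have : 1 ≤ ker (n + 2) := one_le_ker (n + 1)
    have := one_le_ker n
    show 1 ≤ ker (n + 2) + ker (n + 1) + ker n - 1
    omega

theorem cast_ker_add_three {R : Type*} [AddGroupWithOne R] (n : ℕ) :
    (ker (n + 3) : R) = ker (n + 2) + ker (n + 1) + ker n - 1 := by
  have h : 1 ≤ ker (n + 2) + ker (n + 1) + ker n := by linarith [one_le_ker (n + 1)]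
  rw [ker, Nat.cast_sub h]
  push_cast
  rfl

theorem two_mul_ker_add_two : ∀ n, 2 * (ker (n + 2) : ℤ) = trib (n + 2) - trib n + 1
  | 0 | 1 | 2 => by norm_num [ker, trib]
  | n + 3 => by
    have h5 : (trib (n + 5) : ℤ) = trib (n + 4) + trib (n + 3) + trib (n + 2) :=
      cast_trib_add_three (n + 2)
    have h3 : (trib (n + 3) : ℤ) = trib (n + 2) + trib (n + 1) + trib n := cast_trib_add_three n
    rw [cast_ker_add_three]
    linarith [two_mul_ker_add_two (n + 2), two_mul_ker_add_two (n + 1), two_mul_ker_add_two n]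

theorem two_mul_sum_Icc_four (n : ℕ) :
    2 * ∑ i ∈ Finset.Icc 4 (n + 4), ((trib (i - 2) : ℤ) - ker (i - 3) + 1) =
      (trib (n + 4) : ℤ) - trib (n + 3) + 2 * trib (n + 2) + (n + 4 : ℕ) - 6 := by
  induction n with
  | zero => norm_num [trib, ker]
  | succ n ih =>
    rw [show n + 1 + 4 = n + 5 from rfl, Finset.sum_Icc_succ_top (by omega), mul_add, ih]
    simp only [Nat.reduceSubDiff]
    rw [cast_trib_add_three (n + 2), cast_trib_add_three (n + 1), cast_trib_add_three n]
    push_cast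
    linarith [two_mul_ker_add_two n]

/-- For m ≥ 4, with Θ_m = ∑_{i=4}^{m} (t_{i-4} − k_{i-3} + 1), we have
2·Θ_m = t_{m-2} − t_{m-3} + 2t_{m-4} + m − 6 (stated over ℤ; `trib (i-2)` = t_{i-4},
`trib m` = t_{m-2}, `trib (m-1)` = t_{m-3}, `trib (m-2)` = t_{m-4}). -/
theorem two_mul_Theta (m : ℕ) (hm : 4 ≤ m) :
    2 * ∑ i ∈ Finset.Icc 4 m, ((trib (i - 2) : ℤ) - ker (i - 3) + 1) =
      (trib m : ℤ) - trib (m - 1) + 2 * trib (m - 2) + m - 6 := by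
  obtain ⟨n, rfl⟩ := Nat.exists_eq_add_of_le' hm
  exact two_mul_sum_Icc_four n
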